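/- arXiv:1510.03406 — 2 statements merged into one kernel-verified Lean document; each statement's English description precedes it below -/
import Mathlib

section
/- Let C \subseteq \mathbb{H}(n,2) be a 2-design of cardinality M with n+1 < M < 2n, and suppose the maximum distance \tilde{d} between distinct points of C satisfies \tilde{d} < n with n - \tilde{d} even. Then the minimal inner product \ell(C) = \min_{x\ne y \in C}\langle x,y\rangle satisfies \ell(C) \ge 1 - \sqrt{2M/n}. -/
/-- Hamming distance between two binary words. -/
def hammingDist' {n : ℕ} (x y : Fin n → Fin 2) : ℕ :=
  (Finset.univ.filter fun i => x i ≠ y i).card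

/-- "Inner product" `⟨x,y⟩ = 1 - 2 d(x,y)/n`. -/
noncomputable def innerProd {n : ℕ} (x y : Fin n → Fin 2) : ℝ :=
  1 - 2 * (hammingDist' x y : ℝ) / (n : ℝ)

/-!
Evaluating the design identity at `u = x` and keeping only the terms `z = x` and `z = y` gives
`1 + ⟨x,y⟩² ≤ M/n`, so `⟨x,y⟩ ≥ -√(M/n - 1)`. Finally `√(t - 1) + 1 ≤ √(2t)` for `t ≥ 1`,
because `2√(t - 1) ≤ (t - 1) + 1` by AM-GM.
-/

theorem innerProd_self {n : ℕ} (x : Fin n → Fin 2) : innerProd x x = 1 := by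
  simp [innerProd, hammingDist']

theorem Finset.add_le_sum_of_nonneg {ι : Type*} [DecidableEq ι] {s : Finset ι} {f : ι → ℝ}
    (hf : ∀ i ∈ s, 0 ≤ f i) {i j : ι} (hi : i ∈ s) (hj : j ∈ s) (hij : i ≠ j) :
    f i + f j ≤ ∑ k ∈ s, f k := by
  rw [← Finset.sum_pair hij]
  exact Finset.sum_le_sum_of_subset_of_nonneg (Finset.insert_subset hi (by simpa using hj))
    fun k hk _ => hf k hk

theorem Real.sqrt_sub_one_add_one_le_sqrt_two_mul {t : ℝ} (ht : 1 ≤ t) :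
    √(t - 1) + 1 ≤ √(2 * t) := by
  have hsq : √(t - 1) ^ 2 = t - 1 := Real.sq_sqrt (by linarith)
  rw [Real.le_sqrt (by positivity) (by linarith)]
  nlinarith [sq_nonneg (√(t - 1) - 1)]

theorem one_sub_sqrt_two_mul_le_of_one_add_sq_le {a t : ℝ} (h : 1 + a ^ 2 ≤ t) :
    1 - √(2 * t) ≤ a := by
  have hlow : -√(t - 1) ≤ a := Real.neg_sqrt_le_of_sq_le (by linarith)
  linarith [Real.sqrt_sub_one_add_one_le_sqrt_two_mul (by nlinarith [sq_nonneg a] : 1 ≤ t)]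

theorem stmt_9_general (n M : ℕ)
    (C : Finset (Fin n → Fin 2))
    -- 2-design property (instance for `f(t) = t²`):
    (hdes : ∀ u : Fin n → Fin 2, ∑ y ∈ C, (innerProd u y) ^ 2 = (M : ℝ) / (n : ℝ)) :
    ∀ x ∈ C, ∀ y ∈ C, x ≠ y →
      1 - Real.sqrt (2 * (M : ℝ) / (n : ℝ)) ≤ innerProd x y := by
  intro x hx y hy hxy
  have hpair : 1 + innerProd x y ^ 2 ≤ (M : ℝ) / n := by
    simpa only [hdes x, innerProd_self, one_pow] using
      Finset.add_le_sum_of_nonneg (f := fun z => innerProd x z ^ 2)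
        (fun z _ => sq_nonneg _) hx hy hxy
  simpa only [mul_div_assoc] using one_sub_sqrt_two_mul_le_of_one_add_sq_le hpair

theorem stmt_9 (n M : ℕ) (hn : 1 ≤ n)
    (C : Finset (Fin n → Fin 2)) (hC : C.card = M)
    (hM1 : n + 1 < M) (hM2 : M < 2 * n)
    -- 2-design property (instance for `f(t) = t²`):
    (hdes : ∀ u : Fin n → Fin 2, ∑ y ∈ C, (innerProd u y) ^ 2 = (M : ℝ) / (n : ℝ))
    -- `dt` is the maximum distance between distinct points of `C`:
    (dt : ℕ)
    (hmax : ∀ x ∈ C, ∀ y ∈ C, x ≠ y → hammingDist' x y ≤ dt)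
    (hach : ∃ x ∈ C, ∃ y ∈ C, x ≠ y ∧ hammingDist' x y = dt)
    (hdt : dt < n) (hev : Even (n - dt)) :
    ∀ x ∈ C, ∀ y ∈ C, x ≠ y →
      1 - Real.sqrt (2 * (M : ℝ) / (n : ℝ)) ≤ innerProd x y :=
  stmt_9_general n M C hdes
end

section
/- Let C \subseteq \mathbb{H}(n,2) be a 2-design of cardinality M with n+1 < M < 2n whose minimum distance d is even. Then the maximal inner product s(C) = \max_{x\ne y \in C}\langle x,y\rangle satisfies s(C) \le -1 + \sqrt{2(M-2)/n}. -/
/-!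
Let `x, y ∈ C` realise the minimum distance `d = 2k`, and let `u` be a word at distance `k`
from both, so that `⟨u, x⟩ = ⟨u, y⟩ = t := 1 - d/n`. Dropping all other terms of the design
identity for `f(s) = (s - a)²` at `u` gives `2 (t - a)² ≤ (a² + 1/n) M` for every `a`; the choice
`a = -2t/(M-2)` turns this into `(2t)² ≤ 2(M-2)/n`. Finally every `⟨p, q⟩` with `p ≠ q` in `C` is
at most `1 - 2d/n = 2t - 1`.
-/

open Finset

theorem hammingDist'_eq_hammingDist {n : ℕ} (x y : Fin n → Fin 2) :
    hammingDist' x y = hammingDist x y :=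
  rfl

theorem exists_hammingDist_eq_of_le {ι : Type*} [Fintype ι] {β : ι → Type*}
    [∀ i, DecidableEq (β i)] (x y : ∀ i, β i) {k : ℕ} (hk : k ≤ hammingDist x y) :
    ∃ u : ∀ i, β i, hammingDist u x = k ∧ hammingDist u y = hammingDist x y - k := by
  classical
  obtain ⟨T, hTS, hTcard⟩ := exists_subset_card_eq hk
  refine ⟨fun i => if i ∈ T then y i else x i, ?_, ?_⟩
  · have hdiff : ({i | (if i ∈ T then y i else x i) ≠ x i} : Finset ι) = T := by
      ext i
      have hi := @hTS i
      by_cases hiT : i ∈ T <;> simp_all [hammingDist, eq_comm]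
    rw [hammingDist, hdiff, hTcard]
  · have hdiff : ({i | (if i ∈ T then y i else x i) ≠ y i} : Finset ι)
        = ({i | x i ≠ y i} : Finset ι) \ T := by
      ext i
      by_cases hiT : i ∈ T <;> simp [hiT]
    rw [hammingDist, hdiff, card_sdiff_of_subset hTS, hTcard]
    rfl

theorem innerProd_le_of_le_hammingDist {n : ℕ} {x y : Fin n → Fin 2} {d : ℕ}
    (h : d ≤ hammingDist' x y) : innerProd x y ≤ 1 - 2 * (d : ℝ) / n := by
  unfold innerProd
  gcongr

theorem two_mul_sq_le_of_design {n M : ℕ} {C : Finset (Fin n → Fin 2)}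
    (hdes : ∀ u : Fin n → Fin 2, ∀ a : ℝ,
      ∑ y ∈ C, (innerProd u y - a) ^ 2 = (a ^ 2 + 1 / (n : ℝ)) * (M : ℝ))
    {x y u : Fin n → Fin 2} (hx : x ∈ C) (hy : y ∈ C) (hxy : x ≠ y) {t : ℝ}
    (hux : innerProd u x = t) (huy : innerProd u y = t) (a : ℝ) :
    2 * (t - a) ^ 2 ≤ (a ^ 2 + 1 / (n : ℝ)) * M := by
  have hpair : ({x, y} : Finset _) ⊆ C := insert_subset hx (singleton_subset_iff.2 hy)
  calc 2 * (t - a) ^ 2 = ∑ z ∈ {x, y}, (innerProd u z - a) ^ 2 := by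
        rw [sum_pair hxy, hux, huy]; ring
    _ ≤ ∑ z ∈ C, (innerProd u z - a) ^ 2 :=
        sum_le_sum_of_subset_of_nonneg hpair fun _ _ _ => sq_nonneg _
    _ = (a ^ 2 + 1 / (n : ℝ)) * M := hdes u a

theorem two_mul_le_sqrt_of_forall_two_mul_sq_sub_le {t m ν : ℝ} (hν : 0 < ν) (hm : 2 < m)
    (h : ∀ a : ℝ, 2 * (t - a) ^ 2 ≤ (a ^ 2 + 1 / ν) * m) :
    2 * t ≤ √(2 * (m - 2) / ν) := by
  have hm2 : 0 < m - 2 := by linarith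
  set a := -2 * t / (m - 2)
  -- `a` minimises `(a² + 1/ν) m - 2 (t - a)²`, where it takes this value:
  have hmin : (a ^ 2 + 1 / ν) * m - 2 * (t - a) ^ 2 = m * (1 / ν - 2 * t ^ 2 / (m - 2)) := by
    simp only [a]; field_simp; ring
  have hratio : 2 * t ^ 2 / (m - 2) ≤ 1 / ν := by nlinarith [h a]
  rw [div_le_div_iff₀ hm2 hν] at hratio
  refine Real.le_sqrt_of_sq_le ?_
  rw [le_div_iff₀ hν]
  linarith

theorem stmt_10_general (n M : ℕ) (hn : 1 ≤ n)
    (C : Finset (Fin n → Fin 2))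
    (hM1 : n + 1 < M)
    -- 2-design property (instances for the polynomials `f(t) = (t-a)²`):
    (hdes : ∀ u : Fin n → Fin 2, ∀ a : ℝ,
      ∑ y ∈ C, (innerProd u y - a) ^ 2 = (a ^ 2 + 1 / (n : ℝ)) * (M : ℝ))
    -- `d` is the minimum distance of `C`, and it is even:
    (d : ℕ)
    (hmin : ∀ x ∈ C, ∀ y ∈ C, x ≠ y → d ≤ hammingDist' x y)
    (hach : ∃ x ∈ C, ∃ y ∈ C, x ≠ y ∧ hammingDist' x y = d)
    (hev : Even d) :
    ∀ x ∈ C, ∀ y ∈ C, x ≠ y →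
      innerProd x y ≤ -1 + Real.sqrt (2 * ((M : ℝ) - 2) / (n : ℝ)) := by
  intro p hp q hq hpq
  obtain ⟨x, hx, y, hy, hxy, hd⟩ := hach
  obtain ⟨k, rfl⟩ := hev
  rw [hammingDist'_eq_hammingDist] at hd
  obtain ⟨u, hux, huy⟩ := exists_hammingDist_eq_of_le x y (k := k) (by omega)
  set t : ℝ := 1 - 2 * (k : ℝ) / n
  have hux' : innerProd u x = t := by rw [innerProd, hammingDist'_eq_hammingDist, hux]
  have huy' : innerProd u y = t := by
    rw [innerProd, hammingDist'_eq_hammingDist, huy, hd, Nat.add_sub_cancel]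
  have h2t : 2 * t ≤ √(2 * ((M : ℝ) - 2) / n) :=
    two_mul_le_sqrt_of_forall_two_mul_sq_sub_le (by positivity) (by norm_cast; omega)
      (two_mul_sq_le_of_design hdes hx hy hxy hux' huy')
  have hpq := innerProd_le_of_le_hammingDist (hmin p hp q hq hpq)
  have hd_eq : 1 - 2 * ((k + k : ℕ) : ℝ) / n = 2 * t - 1 := by push_cast; ring
  linarith

theorem stmt_10 (n M : ℕ) (hn : 1 ≤ n)
    (C : Finset (Fin n → Fin 2)) (hC : C.card = M)
    (hM1 : n + 1 < M) (hM2 : M < 2 * n)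
    -- 2-design property (instances for the polynomials `f(t) = (t-a)²`):
    (hdes : ∀ u : Fin n → Fin 2, ∀ a : ℝ,
      ∑ y ∈ C, (innerProd u y - a) ^ 2 = (a ^ 2 + 1 / (n : ℝ)) * (M : ℝ))
    -- `d` is the minimum distance of `C`, and it is even:
    (d : ℕ)
    (hmin : ∀ x ∈ C, ∀ y ∈ C, x ≠ y → d ≤ hammingDist' x y)
    (hach : ∃ x ∈ C, ∃ y ∈ C, x ≠ y ∧ hammingDist' x y = d)
    (hev : Even d) :
    ∀ x ∈ C, ∀ y ∈ C, x ≠ y →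
      innerProd x y ≤ -1 + Real.sqrt (2 * ((M : ℝ) - 2) / (n : ℝ)) :=
  stmt_10_general n M hn C hM1 hdes d hmin hach hev
end
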